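/- arXiv:1209.6544 — 2 statements merged into one kernel-verified Lean document; each statement's English description precedes it below -/
import Mathlib

section
/- Let k be an algebraically closed field of characteristic zero and p, q ∈ k^×. The matrices W_p = (0,−1,0; p,0,0; 0,0,1) and W_q = (0,−1,0; q,0,0; 0,0,1) (rows listed in order) are standard-form congruent if and only if p = q or p = q⁻¹. -/
/-!
For a square matrix `A`, the quantity `det (A + Aᵀ) / det A` is unchanged when `A` is replaced by
`α • Pᵀ * A * P`: both determinants pick up the same factor `α ^ n * det P ^ 2`. Standard-form
congruence acts on the upper-left `2 × 2` block exactly by such a scaled congruence, and for the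
block `!![0, -1; q, 0]` of `W_q` the invariant is `-(q - 1) ^ 2 / q = 2 - (q + q⁻¹)`. Hence
`W_p ∼ W_q` forces `p + p⁻¹ = q + q⁻¹`, i.e. `p = q` or `p = q⁻¹`; conversely `W_{q⁻¹}` is
obtained from `W_q` by an explicit element of `𝒫₃`.
-/

open Matrix

/-- The standard-form map `sf` on `3×3` matrices,
sending `(M₁ M₂; M₃ᵀ m)` to `(M₁ M₂+M₃; 0 m)`. -/
def sf3 {k : Type*} [Field k] (M : Matrix (Fin 3) (Fin 3) k) : Matrix (Fin 3) (Fin 3) k :=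
  !![M 0 0, M 0 1, M 0 2 + M 2 0;
     M 1 0, M 1 1, M 1 2 + M 2 1;
     0, 0, M 2 2]

/-- Membership in `𝒫₃`: block form `(P₁ P₂; 0 1)` with `P₁ ∈ GL₂(k)`. -/
def memP3 {k : Type*} [Field k] (P : Matrix (Fin 3) (Fin 3) k) : Prop :=
  IsUnit !![P 0 0, P 0 1; P 1 0, P 1 1] ∧ P 2 0 = 0 ∧ P 2 1 = 0 ∧ P 2 2 = 1

/-- Standard-form congruence on `3×3` matrices. -/
def SfCongruent3 {k : Type*} [Field k] (M N : Matrix (Fin 3) (Fin 3) k) : Prop :=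
  ∃ P : Matrix (Fin 3) (Fin 3) k, memP3 P ∧
    ∃ α : k, α ≠ 0 ∧ sf3 M = α • sf3 (Pᵀ * N * P)

section ScaledCongruence

variable {n R : Type*} [Fintype n] [DecidableEq n] [CommRing R]

theorem det_smul_transpose_mul_mul (α : R) (P A : Matrix n n R) :
    det (α • (Pᵀ * A * P)) = α ^ Fintype.card n * det P ^ 2 * det A := by
  rw [det_smul, det_mul, det_mul, det_transpose]
  ring

omit [DecidableEq n] in
theorem smul_transpose_mul_mul_add_transpose (α : R) (P A : Matrix n n R) :
    α • (Pᵀ * A * P) + (α • (Pᵀ * A * P))ᵀ = α • (Pᵀ * (A + Aᵀ) * P) := by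
  simp only [transpose_smul, transpose_mul, transpose_transpose, Matrix.mul_add, Matrix.add_mul,
    Matrix.mul_assoc, smul_add]

theorem det_add_transpose_mul_det_eq_of_eq_smul {A B P : Matrix n n R} {α : R}
    (h : B = α • (Pᵀ * A * P)) : det (B + Bᵀ) * det A = det (A + Aᵀ) * det B := by
  subst h
  rw [smul_transpose_mul_mul_add_transpose, det_smul_transpose_mul_mul,
    det_smul_transpose_mul_mul]
  ring

end ScaledCongruence

theorem submatrix_castSucc_transpose_mul_mul {R : Type*} [CommRing R] {n : ℕ}
    {P : Matrix (Fin (n + 1)) (Fin (n + 1)) R} (hP : ∀ j : Fin n, P (Fin.last n) j.castSucc = 0)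
    (N : Matrix (Fin (n + 1)) (Fin (n + 1)) R) :
    (Pᵀ * N * P).submatrix Fin.castSucc Fin.castSucc =
      (P.submatrix Fin.castSucc Fin.castSucc)ᵀ * N.submatrix Fin.castSucc Fin.castSucc *
        P.submatrix Fin.castSucc Fin.castSucc := by
  ext i j
  simp [mul_apply, Fin.sum_univ_castSucc, hP]

section StandardForm

variable {k : Type*} [Field k]

theorem submatrix_castSucc_sf3 (M : Matrix (Fin 3) (Fin 3) k) :
    (sf3 M).submatrix Fin.castSucc Fin.castSucc = M.submatrix Fin.castSucc Fin.castSucc := by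
  ext i j
  fin_cases i <;> fin_cases j <;> rfl

theorem SfCongruent3.exists_submatrix_castSucc_eq_smul {M N : Matrix (Fin 3) (Fin 3) k}
    (h : SfCongruent3 M N) : ∃ (P : Matrix (Fin 2) (Fin 2) k) (α : k),
      M.submatrix Fin.castSucc Fin.castSucc =
        α • (Pᵀ * N.submatrix Fin.castSucc Fin.castSucc * P) := by
  obtain ⟨P, ⟨-, hP₀, hP₁, -⟩, α, -, hMN⟩ := h
  have hP : ∀ j : Fin 2, P (Fin.last 2) j.castSucc = 0 := fun j => by fin_cases j <;> assumption
  refine ⟨P.submatrix Fin.castSucc Fin.castSucc, α, ?_⟩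
  rw [← submatrix_castSucc_sf3 M, hMN, ← submatrix_castSucc_transpose_mul_mul hP,
    ← submatrix_castSucc_sf3 (Pᵀ * N * P)]
  rfl

theorem sfCongruent3_of_transpose_mul_mul_eq {M N P : Matrix (Fin 3) (Fin 3) k} (hP : memP3 P)
    (h : Pᵀ * N * P = M) : SfCongruent3 M N :=
  ⟨P, hP, 1, one_ne_zero, by rw [h, one_smul]⟩

theorem memP3_one : memP3 (1 : Matrix (Fin 3) (Fin 3) k) := by
  refine ⟨?_, rfl, rfl, rfl⟩
  simp [← Matrix.one_fin_two]

theorem sfCongruent3_refl (M : Matrix (Fin 3) (Fin 3) k) : SfCongruent3 M M :=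
  sfCongruent3_of_transpose_mul_mul_eq memP3_one (by simp)

end StandardForm

theorem sub_mul_mul_sub_one_eq_zero_of_eq_smul {k : Type*} [Field k] {p q α : k}
    {P : Matrix (Fin 2) (Fin 2) k} (h : !![0, -1; p, 0] = α • (Pᵀ * !![0, -1; q, 0] * P)) :
    (p - q) * (p * q - 1) = 0 := by
  have := det_add_transpose_mul_det_eq_of_eq_smul h
  simp only [det_fin_two, Matrix.add_apply, transpose_apply, of_apply, cons_val', cons_val_zero,
    cons_val_one, cons_val_fin_one] at this
  linear_combination -this

theorem stmt_13_general (k : Type*) [Field k]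
    (p q : k) (hq : q ≠ 0) :
    SfCongruent3 !![(0 : k), -1, 0; p, 0, 0; 0, 0, 1]
        !![(0 : k), -1, 0; q, 0, 0; 0, 0, 1] ↔
      p = q ∨ p = q⁻¹ := by
  constructor
  · intro h
    have hblock (r : k) : (!![(0 : k), -1, 0; r, 0, 0; 0, 0, 1]).submatrix Fin.castSucc
        Fin.castSucc = !![0, -1; r, 0] := by
      ext i j
      fin_cases i <;> fin_cases j <;> rfl
    obtain ⟨P, α, hPα⟩ := h.exists_submatrix_castSucc_eq_smul
    rw [hblock, hblock] at hPα
    rcases mul_eq_zero.mp (sub_mul_mul_sub_one_eq_zero_of_eq_smul hPα) with hpq | hpq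
    · exact .inl (sub_eq_zero.mp hpq)
    · exact .inr (eq_inv_of_mul_eq_one_left (sub_eq_zero.mp hpq))
  · rintro (rfl | rfl)
    · exact sfCongruent3_refl _
    · refine sfCongruent3_of_transpose_mul_mul_eq (P := !![0, 1, 0; -q⁻¹, 0, 0; 0, 0, 1])
        ⟨by simp [isUnit_iff_isUnit_det, hq], rfl, rfl, rfl⟩ ?_
      ext i j
      fin_cases i <;> fin_cases j <;> simp [mul_apply, Fin.sum_univ_three, hq]

theorem stmt_13 (k : Type*) [Field k] [IsAlgClosed k] [CharZero k]
    (p q : k) (hp : p ≠ 0) (hq : q ≠ 0) :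
    SfCongruent3 !![(0 : k), -1, 0; p, 0, 0; 0, 0, 1]
        !![(0 : k), -1, 0; q, 0, 0; 0, 0, 1] ↔
      p = q ∨ p = q⁻¹ :=
  stmt_13_general k p q hq
end

section
/- Let k be an algebraically closed field of characteristic zero. The four k-algebras A₁(k) = k⟨x,y | xy − yx − 1⟩ (the Weyl algebra), 𝔘 = k⟨x,y | yx − xy + y⟩, 𝒥 = k⟨x,y | yx − xy + y²⟩ (the Jordan plane), and 𝒥₁ = k⟨x,y | yx − xy + y² + 1⟩ (the deformed Jordan plane) are pairwise non-isomorphic as k-algebras. -/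
noncomputable section

/-- The generator `x` of the free algebra `k⟨x,y⟩`. -/
def X (k : Type*) [Field k] : FreeAlgebra k (Fin 2) := FreeAlgebra.ι k 0

/-- The generator `y` of the free algebra `k⟨x,y⟩`. -/
def Y (k : Type*) [Field k] : FreeAlgebra k (Fin 2) := FreeAlgebra.ι k 1

/-- The relation identifying `f` with `0`. -/
def relOf (k : Type*) [Field k] (f : FreeAlgebra k (Fin 2)) :
    FreeAlgebra k (Fin 2) → FreeAlgebra k (Fin 2) → Prop :=
  fun a b => a = f ∧ b = 0

/-- `k⟨x, y | f⟩`: the free algebra on `x, y` modulo the two-sided ideal generated by `f`. -/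
abbrev QuotAlg (k : Type*) [Field k] (f : FreeAlgebra k (Fin 2)) := RingQuot (relOf k f)

/-!
An isomorphism of `k`-algebras induces a bijection of characters `A →ₐ[k] k` and an isomorphism
of abelianizations, and we distinguish the four algebras by these. A character of the Weyl
algebra would satisfy `xy - yx = 1` in `k`; the other three have characters. In the
abelianizations the relations become `y = 0`, `y² = 0` and `y² = -1` respectively. Thus
`𝔘^ab ≅ k[x]` is reduced, whereas `y` is a nonzero nilpotent of `𝒥^ab` (it maps to `ε` in the dual
numbers). With `i² = -1`, `(1 - i y)/2` is an idempotent of `𝒥₁^ab` on which the characters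
`y ↦ -i` and `y ↦ i` take the values `0` and `1`. No idempotent of `𝔘^ab` or `𝒥^ab` can do this:
there `y` is nilpotent, so every character factors through `y ↦ 0` to the domain `k[x]`, where
idempotents are `0` or `1`.
-/

def RingAbelianization.Rel (A : Type*) [Ring A] : A → A → Prop :=
  fun a b => ∃ u v : A, a = u * v ∧ b = v * u

abbrev RingAbelianization (A : Type*) [Ring A] := RingQuot (RingAbelianization.Rel A)

namespace RingAbelianization

instance (A : Type*) [Ring A] : CommRing (RingAbelianization A) :=
  { (inferInstance : Ring (RingAbelianization A)) with
    mul_comm := by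
      intro a b
      obtain ⟨u, rfl⟩ := RingQuot.mkRingHom_surjective (Rel A) a
      obtain ⟨v, rfl⟩ := RingQuot.mkRingHom_surjective (Rel A) b
      rw [← map_mul, ← map_mul]
      exact RingQuot.mkRingHom_rel ⟨u, v, rfl, rfl⟩ }

variable {k : Type*} [CommSemiring k]
variable {A B : Type*} [Ring A] [Algebra k A] [Ring B] [Algebra k B]

variable (k A) in
def mk : A →ₐ[k] RingAbelianization A := RingQuot.mkAlgHom k (Rel A)

def lift {C : Type*} [CommRing C] [Algebra k C] (f : A →ₐ[k] C) :
    RingAbelianization A →ₐ[k] C :=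
  RingQuot.liftAlgHom k ⟨f, by rintro _ _ ⟨u, v, rfl, rfl⟩; rw [map_mul, map_mul, mul_comm]⟩

@[simp] lemma lift_mk {C : Type*} [CommRing C] [Algebra k C] (f : A →ₐ[k] C) (a : A) :
    lift f (mk k A a) = f a :=
  RingQuot.liftAlgHom_mkAlgHom_apply _ _ _ _

lemma hom_ext {C : Type*} [Semiring C] [Algebra k C] {f g : RingAbelianization A →ₐ[k] C}
    (h : f.comp (mk k A) = g.comp (mk k A)) : f = g :=
  RingQuot.ringQuot_ext' k f g h

def congr (e : A ≃ₐ[k] B) : RingAbelianization A ≃ₐ[k] RingAbelianization B :=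
  AlgEquiv.ofAlgHom (lift ((mk k B).comp e.toAlgHom)) (lift ((mk k A).comp e.symm.toAlgHom))
    (hom_ext (by ext; simp)) (hom_ext (by ext; simp))

end RingAbelianization

section Generators

variable {k : Type*} [Field k] {C : Type*} [Semiring C] [Algebra k C]

@[simp] lemma lift_X (a b : C) : FreeAlgebra.lift k ![a, b] (X k) = a := by simp [X]

@[simp] lemma lift_Y (a b : C) : FreeAlgebra.lift k ![a, b] (Y k) = b := by simp [Y]

end Generators

namespace QuotAlg

variable {k : Type*} [Field k] {f : FreeAlgebra k (Fin 2)}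

section Presentation

variable {C : Type*} [Semiring C] [Algebra k C]

variable (k f) in
def mk : FreeAlgebra k (Fin 2) →ₐ[k] QuotAlg k f := RingQuot.mkAlgHom k (relOf k f)

variable (k f) in
def x : QuotAlg k f := mk k f (X k)

variable (k f) in
def y : QuotAlg k f := mk k f (Y k)

def lift (a b : C) (h : FreeAlgebra.lift k ![a, b] f = 0) : QuotAlg k f →ₐ[k] C :=
  RingQuot.liftAlgHom k ⟨FreeAlgebra.lift k ![a, b], by rintro _ _ ⟨rfl, rfl⟩; rw [h, map_zero]⟩

@[simp] lemma lift_x (a b : C) (h) : lift (f := f) a b h (x k f) = a := by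
  simp [lift, x, mk]

@[simp] lemma lift_y (a b : C) (h) : lift (f := f) a b h (y k f) = b := by
  simp [lift, y, mk]

lemma comp_mk (φ : QuotAlg k f →ₐ[k] C) :
    φ.comp (mk k f) = FreeAlgebra.lift k ![φ (x k f), φ (y k f)] := by
  apply FreeAlgebra.hom_ext
  funext i
  fin_cases i <;> simp [x, y, X, Y]

lemma hom_ext {φ ψ : QuotAlg k f →ₐ[k] C} (hx : φ (x k f) = ψ (x k f))
    (hy : φ (y k f) = ψ (y k f)) : φ = ψ :=
  RingQuot.ringQuot_ext' k φ ψ <| by rw [← mk, comp_mk φ, comp_mk ψ, hx, hy]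

lemma lift_apply_self (φ : QuotAlg k f →ₐ[k] C) :
    FreeAlgebra.lift k ![φ (x k f), φ (y k f)] f = 0 := by
  rw [← comp_mk, AlgHom.comp_apply, mk, RingQuot.mkAlgHom_rel k (s := relOf k f) ⟨rfl, rfl⟩,
    map_zero, map_zero]

end Presentation

section Abelianization

variable (k f) in
def xAb : RingAbelianization (QuotAlg k f) := RingAbelianization.mk k _ (x k f)

variable (k f) in
def yAb : RingAbelianization (QuotAlg k f) := RingAbelianization.mk k _ (y k f)

variable {C : Type*} [CommRing C] [Algebra k C]

def liftAb (a b : C) (h : FreeAlgebra.lift k ![a, b] f = 0) :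
    RingAbelianization (QuotAlg k f) →ₐ[k] C :=
  RingAbelianization.lift (lift a b h)

@[simp] lemma liftAb_xAb (a b : C) (h) : liftAb (f := f) a b h (xAb k f) = a := by
  simp [liftAb, xAb]

@[simp] lemma liftAb_yAb (a b : C) (h) : liftAb (f := f) a b h (yAb k f) = b := by
  simp [liftAb, yAb]

lemma hom_ext_ab {φ ψ : RingAbelianization (QuotAlg k f) →ₐ[k] C}
    (hx : φ (xAb k f) = ψ (xAb k f)) (hy : φ (yAb k f) = ψ (yAb k f)) : φ = ψ :=
  RingAbelianization.hom_ext (hom_ext hx hy)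

lemma liftAb_apply_self (φ : RingAbelianization (QuotAlg k f) →ₐ[k] C) :
    FreeAlgebra.lift k ![φ (xAb k f), φ (yAb k f)] f = 0 :=
  lift_apply_self (φ.comp (RingAbelianization.mk k _))

lemma lift_xAb_yAb_self : FreeAlgebra.lift k ![xAb k f, yAb k f] f = 0 :=
  liftAb_apply_self (AlgHom.id k _)

end Abelianization

end QuotAlg

section SeparatingIdempotent

variable {k R S : Type*} [CommSemiring k] [Semiring R] [Algebra k R] [Semiring S] [Algebra k S]

variable (k) in
def IsSeparatingIdempotent (e : R) : Prop :=
  IsIdempotentElem e ∧ ∃ χ₀ χ₁ : R →ₐ[k] k, χ₀ e = 0 ∧ χ₁ e = 1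

lemma IsSeparatingIdempotent.map {e : R} (he : IsSeparatingIdempotent k e) (φ : R ≃ₐ[k] S) :
    IsSeparatingIdempotent k (φ e) := by
  obtain ⟨hidem, χ₀, χ₁, h₀, h₁⟩ := he
  exact ⟨hidem.map φ, χ₀.comp φ.symm.toAlgHom, χ₁.comp φ.symm.toAlgHom, by simpa using h₀,
    by simpa using h₁⟩

lemma not_isSeparatingIdempotent_of_forall_eq_comp [Nontrivial k] [IsDomain S] (π : R →ₐ[k] S)
    (hπ : ∀ χ : R →ₐ[k] k, ∃ g : S →ₐ[k] k, χ = g.comp π) (e : R) :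
    ¬ IsSeparatingIdempotent k e := by
  rintro ⟨hidem, χ₀, χ₁, h₀, h₁⟩
  obtain ⟨g₀, rfl⟩ := hπ χ₀
  obtain ⟨g₁, rfl⟩ := hπ χ₁
  rcases IsIdempotentElem.iff_eq_zero_or_one.mp (hidem.map π) with h | h
  · simp [h] at h₁
  · simp [h] at h₀

lemma isSeparatingIdempotent_of_mul_self_eq_neg_one {k R : Type*} [Field k] [NeZero (2 : k)]
    [CommRing R] [Algebra k R] {i : k} (hi : i * i = -1) {u : R} (hu : u * u = -1)
    (χ₀ χ₁ : R →ₐ[k] k) (h₀ : χ₀ u = -i) (h₁ : χ₁ u = i) :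
    IsSeparatingIdempotent k ((2 : k)⁻¹ • (1 - i • u)) := by
  refine ⟨?_, χ₀, χ₁, ?_, ?_⟩
  · have h2 : algebraMap k R 2⁻¹ * 2 = 1 := by
      rw [← map_ofNat (algebraMap k R) 2, ← map_mul, inv_mul_cancel₀ two_ne_zero, map_one]
    have hi' : algebraMap k R i * algebraMap k R i = -1 := by
      rw [← map_mul, hi, map_neg, map_one]
    rw [IsIdempotentElem, Algebra.smul_def, Algebra.smul_def]
    linear_combination (algebraMap k R 2⁻¹ ^ 2 * algebraMap k R i ^ 2) * hu
      - algebraMap k R 2⁻¹ ^ 2 * hi' + (algebraMap k R 2⁻¹ * (1 - algebraMap k R i * u)) * h2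
  · simp [h₀, hi]
  · simp [h₁, hi, one_add_one_eq_two, two_ne_zero]

end SeparatingIdempotent

section FourAlgebras

open QuotAlg Polynomial

variable (k : Type*) [Field k]

abbrev weylRel : FreeAlgebra k (Fin 2) := X k * Y k - Y k * X k - 1

/-- The enveloping algebra `𝔘` of the non-abelian two-dimensional Lie algebra, `[x, y] = y`. -/
abbrev uRel : FreeAlgebra k (Fin 2) := Y k * X k - X k * Y k + Y k

abbrev jordanRel : FreeAlgebra k (Fin 2) := Y k * X k - X k * Y k + Y k * Y k

abbrev deformedJordanRel : FreeAlgebra k (Fin 2) := Y k * X k - X k * Y k + Y k * Y k + 1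

lemma isEmpty_weylRel_algHom : IsEmpty (QuotAlg k (weylRel k) →ₐ[k] k) := by
  refine ⟨fun χ => ?_⟩
  have h := lift_apply_self χ
  simp only [weylRel, map_sub, map_mul, map_one, lift_X, lift_Y] at h
  rw [mul_comm (χ (x k _))] at h
  simp at h

lemma isEmpty_weylRel_algEquiv {f : FreeAlgebra k (Fin 2)} (χ : QuotAlg k f →ₐ[k] k) :
    IsEmpty (QuotAlg k (weylRel k) ≃ₐ[k] QuotAlg k f) :=
  ⟨fun e => (isEmpty_weylRel_algHom k).false (χ.comp e.toAlgHom)⟩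

lemma yAb_uRel_eq_zero : yAb k (uRel k) = 0 := by
  have h := lift_xAb_yAb_self (f := uRel k)
  simp only [uRel, map_add, map_sub, map_mul, lift_X, lift_Y] at h
  linear_combination h

def uRelAbEquivPolynomial : RingAbelianization (QuotAlg k (uRel k)) ≃ₐ[k] k[X] :=
  AlgEquiv.ofAlgHom (liftAb X 0 (by simp)) (aeval (xAb k _))
    (algHom_ext (by simp)) (hom_ext_ab (by simp) (by simp [yAb_uRel_eq_zero]))

instance : IsReduced (RingAbelianization (QuotAlg k (uRel k))) :=
  isReduced_of_injective (uRelAbEquivPolynomial k) (uRelAbEquivPolynomial k).injective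

lemma yAb_jordanRel_mul_self : yAb k (jordanRel k) * yAb k (jordanRel k) = 0 := by
  have h := lift_xAb_yAb_self (f := jordanRel k)
  simp only [jordanRel, map_add, map_sub, map_mul, lift_X, lift_Y] at h
  linear_combination h

lemma yAb_jordanRel_ne_zero : yAb k (jordanRel k) ≠ 0 := fun h => by
  have := congrArg (liftAb (0 : DualNumber k) DualNumber.eps (by simp [DualNumber.eps_mul_eps])) h
  simpa using congrArg TrivSqZeroExt.snd this

lemma isEmpty_uRel_algEquiv_jordanRel :
    IsEmpty (QuotAlg k (uRel k) ≃ₐ[k] QuotAlg k (jordanRel k)) := by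
  refine ⟨fun e => yAb_jordanRel_ne_zero k ?_⟩
  have : IsReduced (RingAbelianization (QuotAlg k (jordanRel k))) :=
    isReduced_of_injective (RingAbelianization.congr e.symm)
      (RingAbelianization.congr e.symm).injective
  exact IsReduced.eq_zero _ ⟨2, by rw [sq, yAb_jordanRel_mul_self]⟩

lemma yAb_deformedJordanRel_mul_self :
    yAb k (deformedJordanRel k) * yAb k (deformedJordanRel k) = -1 := by
  have h := lift_xAb_yAb_self (f := deformedJordanRel k)
  simp only [deformedJordanRel, map_add, map_sub, map_mul, map_one, lift_X, lift_Y] at h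
  linear_combination h

lemma exists_isSeparatingIdempotent_deformedJordanRel [NeZero (2 : k)] {i : k} (hi : i * i = -1) :
    ∃ e : RingAbelianization (QuotAlg k (deformedJordanRel k)), IsSeparatingIdempotent k e :=
  ⟨_, isSeparatingIdempotent_of_mul_self_eq_neg_one hi (yAb_deformedJordanRel_mul_self k)
    (liftAb 0 (-i) (by simp [hi])) (liftAb 0 i (by simp [hi])) (by simp) (by simp)⟩

lemma not_isSeparatingIdempotent_of_isNilpotent_yAb {f : FreeAlgebra k (Fin 2)}
    (hf : FreeAlgebra.lift k ![(X : k[X]), 0] f = 0) (hy : IsNilpotent (yAb k f))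
    (e : RingAbelianization (QuotAlg k f)) : ¬ IsSeparatingIdempotent k e :=
  not_isSeparatingIdempotent_of_forall_eq_comp (liftAb _ _ hf)
    (fun χ => ⟨aeval (χ (xAb k f)), hom_ext_ab (by simp) (by simp [(hy.map χ).eq_zero])⟩) e

lemma isEmpty_algEquiv_deformedJordanRel [NeZero (2 : k)] {i : k} (hi : i * i = -1)
    {f : FreeAlgebra k (Fin 2)} (hf : FreeAlgebra.lift k ![(X : k[X]), 0] f = 0)
    (hy : IsNilpotent (yAb k f)) :
    IsEmpty (QuotAlg k f ≃ₐ[k] QuotAlg k (deformedJordanRel k)) := by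
  obtain ⟨e, he⟩ := exists_isSeparatingIdempotent_deformedJordanRel k hi
  exact ⟨fun φ => not_isSeparatingIdempotent_of_isNilpotent_yAb k hf hy _
    (he.map (RingAbelianization.congr φ.symm))⟩

end FourAlgebras

theorem stmt_17 (k : Type*) [Field k] [IsAlgClosed k] [CharZero k] :
    IsEmpty (QuotAlg k (X k * Y k - Y k * X k - 1) ≃ₐ[k]
      QuotAlg k (Y k * X k - X k * Y k + Y k)) ∧
    IsEmpty (QuotAlg k (X k * Y k - Y k * X k - 1) ≃ₐ[k]
      QuotAlg k (Y k * X k - X k * Y k + Y k * Y k)) ∧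
    IsEmpty (QuotAlg k (X k * Y k - Y k * X k - 1) ≃ₐ[k]
      QuotAlg k (Y k * X k - X k * Y k + Y k * Y k + 1)) ∧
    IsEmpty (QuotAlg k (Y k * X k - X k * Y k + Y k) ≃ₐ[k]
      QuotAlg k (Y k * X k - X k * Y k + Y k * Y k)) ∧
    IsEmpty (QuotAlg k (Y k * X k - X k * Y k + Y k) ≃ₐ[k]
      QuotAlg k (Y k * X k - X k * Y k + Y k * Y k + 1)) ∧
    IsEmpty (QuotAlg k (Y k * X k - X k * Y k + Y k * Y k) ≃ₐ[k]
      QuotAlg k (Y k * X k - X k * Y k + Y k * Y k + 1)) := by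
  obtain ⟨i, hi⟩ := IsAlgClosed.exists_eq_mul_self (-1 : k)
  have hU : IsNilpotent (QuotAlg.yAb k (uRel k)) := by
    rw [yAb_uRel_eq_zero]; exact IsNilpotent.zero
  have hJ : IsNilpotent (QuotAlg.yAb k (jordanRel k)) := ⟨2, by rw [sq, yAb_jordanRel_mul_self]⟩
  exact ⟨isEmpty_weylRel_algEquiv k (QuotAlg.lift 0 0 (by simp)),
    isEmpty_weylRel_algEquiv k (QuotAlg.lift 0 0 (by simp)),
    isEmpty_weylRel_algEquiv k (QuotAlg.lift 0 i (by simp [← hi])),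
    isEmpty_uRel_algEquiv_jordanRel k,
    isEmpty_algEquiv_deformedJordanRel k hi.symm (by simp) hU,
    isEmpty_algEquiv_deformedJordanRel k hi.symm (by simp) hJ⟩
end
end
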